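/- arXiv:2211.04603 — 8 statements merged into one kernel-verified Lean document; each statement's English description precedes it below -/
import Mathlib

section
/- Let X : ℝ → ℝ² be a smooth unit-speed curve with unit tangent T = X', unit normal N (the counter-clockwise rotation of T by π/2) and signed curvature κ defined by T' = κN. Assume κ(s) > 0 for all s, κ is not a constant function, and let a ≠ 0 and b ∈ ℝ. Then there exists a constant vector V ∈ ℝ² such that κ(s) + b = a⟨N(s), V⟩ for all s if and only if κ satisfies the Euler–Lagrange equation of the functional Θ_{1,λ}(γ) = ∫_γ (κ log κ + λ) with λ = −b, namely (d²/ds²)(log κ(s)) + κ(s)² − λκ(s) = 0 for all s. -/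
/-- A smooth unit-speed plane curve with positive nonconstant curvature is a
translating soliton to the flow `∂X/∂t = (1/a)(κ + b)N` if and only if its
curvature satisfies the Euler–Lagrange equation of the functional
`Θ_{1,λ}(γ) = ∫_γ (κ log κ + λ)` with `λ = -b`. -/
theorem translating_soliton_iff_generalized_elastic_p_eq_one
    (X : ℝ → ℝ × ℝ) (κ : ℝ → ℝ) (a b : ℝ)
    (hX : ContDiff ℝ (⊤ : ℕ∞) X) (hκsmooth : ContDiff ℝ (⊤ : ℕ∞) κ)
    (hunit : ∀ s : ℝ, (deriv X s).1 ^ 2 + (deriv X s).2 ^ 2 = 1)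
    (hfrenet : ∀ s : ℝ, deriv (deriv X) s = κ s • (-(deriv X s).2, (deriv X s).1))
    (hpos : ∀ s : ℝ, 0 < κ s)
    (hnonconst : ∃ s₁ s₂ : ℝ, κ s₁ ≠ κ s₂)
    (ha : a ≠ 0) :
    (∃ V : ℝ × ℝ, ∀ s : ℝ,
        κ s + b = a * ((-(deriv X s).2) * V.1 + (deriv X s).1 * V.2)) ↔
      (∀ s : ℝ,
        deriv (deriv (fun t => Real.log (κ t))) s + κ s ^ 2 - (-b) * κ s = 0) := by
  -- notation
  set T1 : ℝ → ℝ := fun s => (deriv X s).1 with hT1def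
  set T2 : ℝ → ℝ := fun s => (deriv X s).2 with hT2def
  have hkinf : ContDiff ℝ (⊤ : ℕ∞) κ := hκsmooth.of_le (by simp)
  have hκdiff : Differentiable ℝ κ := hkinf.differentiable (by simp)
  have hκne : ∀ s, κ s ≠ 0 := fun s => ne_of_gt (hpos s)
  have hdκ : Differentiable ℝ (deriv κ) :=
    ((contDiff_infty_iff_deriv.mp hkinf).2).differentiable (by simp)
  have hXinf : ContDiff ℝ (⊤ : ℕ∞) X := hX.of_le (by simp)
  have hdX : Differentiable ℝ (deriv X) :=
    ((contDiff_infty_iff_deriv.mp hXinf).2).differentiable (by simp)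
  -- derivatives of the tangent components
  have hT1' : ∀ s, HasDerivAt T1 (-(κ s * T2 s)) s := by
    intro s
    have h1 := (hdX s).hasDerivAt
    have h2 : HasDerivAt (fun t => (deriv X t).1) (deriv (deriv X) s).1 s := by
      simpa using (h1.hasFDerivAt.fst).hasDerivAt
    rw [hfrenet s] at h2
    simpa [mul_comm] using h2
  have hT2' : ∀ s, HasDerivAt T2 (κ s * T1 s) s := by
    intro s
    have h1 := (hdX s).hasDerivAt
    have h2 : HasDerivAt (fun t => (deriv X t).2) (deriv (deriv X) s).2 s := by
      simpa using (h1.hasFDerivAt.snd).hasDerivAt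
    rw [hfrenet s] at h2
    simpa [mul_comm] using h2
  -- derivative of log ∘ κ
  have hlog : ∀ s, HasDerivAt (fun t => Real.log (κ t)) (deriv κ s / κ s) s :=
    fun s => ((hκdiff s).hasDerivAt).log (hκne s)
  have hlogderiv : deriv (fun t => Real.log (κ t)) = fun s => deriv κ s / κ s :=
    funext fun s => (hlog s).deriv
  constructor
  · -- translating soliton → Euler–Lagrange
    rintro ⟨V, hV⟩ s
    -- κ = a * (-T2 * V1 + T1 * V2) - b
    have hκeq : κ = fun t => a * ((-T2 t) * V.1 + T1 t * V.2) - b :=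
      funext fun t => by linarith [hV t]
    have hκ' : ∀ t, HasDerivAt κ (-(a * (T1 t * V.1 + T2 t * V.2)) * κ t) t := by
      intro t
      have h : HasDerivAt (fun u => a * ((-T2 u) * V.1 + T1 u * V.2) - b)
          (a * ((-(κ t * T1 t)) * V.1 + (-(κ t * T2 t)) * V.2)) t := by
        exact (((((hT2' t).neg.mul_const V.1).add ((hT1' t).mul_const V.2)).const_mul
          a).sub_const b)
      rw [← hκeq] at h
      convert h using 1
      ring
    have hlogd : deriv (fun t => Real.log (κ t)) =
        fun t => -(a * (T1 t * V.1 + T2 t * V.2)) := by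
      funext t
      have hd : deriv κ t = -(a * (T1 t * V.1 + T2 t * V.2)) * κ t := (hκ' t).deriv
      rw [hlogderiv]
      simp only
      rw [hd]
      exact mul_div_cancel_right₀ _ (hκne t)
    have hsec : HasDerivAt (fun t => -(a * (T1 t * V.1 + T2 t * V.2)))
        (-(a * ((-(κ s * T2 s)) * V.1 + (κ s * T1 s) * V.2))) s :=
      ((((hT1' s).mul_const V.1).add ((hT2' s).mul_const V.2)).const_mul a).neg
    have hd2 : deriv (deriv (fun t => Real.log (κ t))) s
        = -(a * ((-(κ s * T2 s)) * V.1 + (κ s * T1 s) * V.2)) := by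
      rw [hlogd]; exact hsec.deriv
    rw [hd2]
    have hVs' : κ s + b = a * ((-T2 s) * V.1 + T1 s * V.2) := hV s
    linear_combination (κ s) * hVs'
  · -- Euler–Lagrange → translating soliton
    intro hEL
    set g : ℝ → ℝ := fun s => deriv κ s / κ s with hgdef
    have hgdiff : Differentiable ℝ g := hdκ.div hκdiff hκne
    have hgderiv : ∀ s, deriv g s = -(κ s ^ 2) - b * κ s := by
      intro s
      have h1 : deriv g s = deriv (deriv (fun t => Real.log (κ t))) s := by
        rw [hlogderiv]
      have h2 := hEL s
      rw [h1]; linarith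
    set f1 : ℝ → ℝ := fun s => ((κ s + b) * (-T2 s) - g s * T1 s) / a with hf1def
    set f2 : ℝ → ℝ := fun s => ((κ s + b) * T1 s - g s * T2 s) / a with hf2def
    have hf1' : ∀ s, HasDerivAt f1 0 s := by
      intro s
      have h : HasDerivAt f1
          (((deriv κ s) * (-T2 s) + (κ s + b) * (-(κ s * T1 s)) -
            (deriv g s * T1 s + g s * (-(κ s * T2 s)))) / a) s := by
        exact ((((hκdiff s).hasDerivAt.add_const b).mul (hT2' s).neg).sub
          (((hgdiff s).hasDerivAt).mul (hT1' s))).div_const a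
      convert h using 1
      rw [hgderiv s, hgdef]
      simp only
      field_simp [hκne s]
      ring
    have hf2' : ∀ s, HasDerivAt f2 0 s := by
      intro s
      have h : HasDerivAt f2
          (((deriv κ s) * T1 s + (κ s + b) * (-(κ s * T2 s)) -
            (deriv g s * T2 s + g s * (κ s * T1 s))) / a) s := by
        exact ((((hκdiff s).hasDerivAt.add_const b).mul (hT1' s)).sub
          (((hgdiff s).hasDerivAt).mul (hT2' s))).div_const a
      convert h using 1
      rw [hgderiv s, hgdef]
      simp only
      field_simp [hκne s]
      ring
    have hc1 : ∀ s, f1 s = f1 0 := by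
      intro s
      have := is_const_of_deriv_eq_zero (fun t => (hf1' t).differentiableAt)
        (fun t => (hf1' t).deriv) s 0
      exact this
    have hc2 : ∀ s, f2 s = f2 0 := by
      intro s
      exact is_const_of_deriv_eq_zero (fun t => (hf2' t).differentiableAt)
        (fun t => (hf2' t).deriv) s 0
    refine ⟨(f1 0, f2 0), fun s => ?_⟩
    have h1 := hc1 s
    have h2 := hc2 s
    have hu' : T1 s ^ 2 + T2 s ^ 2 = 1 := hunit s
    have key : (-T2 s) * f1 s + T1 s * f2 s = (κ s + b) / a := by
      have e : (-T2 s) * f1 s + T1 s * f2 s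
          = ((κ s + b) * (T1 s ^ 2 + T2 s ^ 2)) / a := by
        rw [hf1def, hf2def]
        simp only
        ring
      rw [e, hu', mul_one]
    have hfin : κ s + b = a * ((-T2 s) * f1 0 + T1 s * f2 0) := by
      rw [← h1, ← h2, key]
      field_simp
    exact hfin
end

section
/- Let P : (0,∞) → ℝ be a smooth function with derivative Ṗ, and let κ : ℝ → ℝ be a smooth positive function satisfying the Euler–Lagrange equation (d²/ds²)(Ṗ(κ(s))) + κ(s)²Ṗ(κ(s)) − κ(s)P(κ(s)) = 0 for all s. Then the function s ↦ ((d/ds)(Ṗ(κ(s))))² + (κ(s)Ṗ(κ(s)) − P(κ(s)))² is constant on ℝ. -/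
/-- If a smooth positive function `κ` satisfies the Euler–Lagrange equation
`(Ṗ(κ))'' + κ²Ṗ(κ) - κP(κ) = 0`, then `((Ṗ(κ))')² + (κṖ(κ) - P(κ))²` is
constant. -/
theorem el_implies_first_integral
    (P : ℝ → ℝ) (hP : ContDiffOn ℝ (⊤ : ℕ∞) P (Set.Ioi 0))
    (κ : ℝ → ℝ) (hκsmooth : ContDiff ℝ (⊤ : ℕ∞) κ) (hpos : ∀ s : ℝ, 0 < κ s)
    (hEL : ∀ s : ℝ,
      deriv (deriv (fun t => deriv P (κ t))) s
        + κ s ^ 2 * deriv P (κ s) - κ s * P (κ s) = 0) :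
    ∃ C : ℝ, ∀ s : ℝ,
      (deriv (fun t => deriv P (κ t)) s) ^ 2
        + (κ s * deriv P (κ s) - P (κ s)) ^ 2 = C := by
  have hκ1 : Differentiable ℝ κ := hκsmooth.differentiable (by simp)
  have hopen : IsOpen (Set.Ioi (0:ℝ)) := isOpen_Ioi
  have hP' : ContDiffOn ℝ (⊤ : ℕ∞) (deriv P) (Set.Ioi 0) :=
    hP.deriv_of_isOpen hopen (by simp)
  set f : ℝ → ℝ := fun t => deriv P (κ t) with hfdef
  have hf : ContDiff ℝ (⊤ : ℕ∞) f := by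
    rw [← contDiffOn_univ]
    exact hP'.comp hκsmooth.contDiffOn (fun x _ => hpos x)
  have hf1 : Differentiable ℝ f := hf.differentiable (by simp)
  have hf'1 : Differentiable ℝ (deriv f) := by
    have h := (contDiff_infty_iff_deriv.mp (hf.of_le (by simp))).2
    exact h.differentiable (by simp)
  have hPd : ∀ s, HasDerivAt (fun t => P (κ t)) (f s * deriv κ s) s := by
    intro s
    have hdiff : DifferentiableAt ℝ P (κ s) :=
      (hP.differentiableOn (by simp)).differentiableAt (hopen.mem_nhds (hpos s))
    exact hdiff.hasDerivAt.comp s (hκ1 s).hasDerivAt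
  have hg : ∀ s, HasDerivAt (fun s => κ s * f s - P (κ s)) (κ s * deriv f s) s := by
    intro s
    have h1 := (((hκ1 s).hasDerivAt.mul (hf1 s).hasDerivAt)).sub (hPd s)
    refine h1.congr_deriv ?_
    ring
  have hE : ∀ s, HasDerivAt
      (fun s => (deriv f s) ^ 2 + (κ s * f s - P (κ s)) ^ 2) 0 s := by
    intro s
    have h1 : HasDerivAt (fun s => deriv f s ^ 2)
        (2 * deriv f s * deriv (deriv f) s) s := by
      have := ((hf'1 s).hasDerivAt).fun_pow 2
      simpa [mul_comm, mul_assoc] using this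
    have h2 : HasDerivAt (fun s => (κ s * f s - P (κ s)) ^ 2)
        (2 * (κ s * f s - P (κ s)) * (κ s * deriv f s)) s := by
      have := (hg s).fun_pow 2
      simpa [mul_comm, mul_assoc] using this
    have h3 := h1.add h2
    refine h3.congr_deriv ?_
    have h4 := hEL s
    linear_combination (2 * deriv f s) * h4
  have hconst := is_const_of_deriv_eq_zero
    (fun s => (hE s).differentiableAt) (fun s => (hE s).deriv)
  exact ⟨(deriv f 0) ^ 2 + (κ 0 * f 0 - P (κ 0)) ^ 2, fun s => hconst s 0⟩
end

section
/- Let X : ℝ → ℝ² be a smooth unit-speed curve with unit tangent T = X', unit normal N (the counter-clockwise rotation of T by π/2) and signed curvature κ defined by T' = κN, with κ(s) > 0 for all s, and let P : (0,∞) → ℝ be a smooth function with derivative Ṗ. Define the vector field along the curve J(s) = (κ(s)Ṗ(κ(s)) − P(κ(s)))·T(s) + ((d/ds)(Ṗ(κ(s))))·N(s). Then J is a constant vector field (i.e., J'(s) = 0 for all s) if and only if κ satisfies the Euler–Lagrange equation (d²/ds²)(Ṗ(κ(s))) + κ(s)²Ṗ(κ(s)) − κ(s)P(κ(s)) = 0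 for all s. -/
open Set ContDiff

/-- rotation by π/2 as a continuous linear map -/
private noncomputable def rot : (ℝ × ℝ) →L[ℝ] (ℝ × ℝ) :=
  (-(ContinuousLinearMap.snd ℝ ℝ ℝ)).prod (ContinuousLinearMap.fst ℝ ℝ ℝ)

private lemma rot_apply (v : ℝ × ℝ) : rot v = (-v.2, v.1) := rfl

/-- The vector field `J(s) = (κṖ(κ) - P(κ))T(s) + (Ṗ(κ))'(s)N(s)` along a
smooth unit-speed convex plane curve is constant (i.e. `J' ≡ 0`) if and only if
the curvature satisfies the Euler–Lagrange equation
`(Ṗ(κ))'' + κ²Ṗ(κ) - κP(κ) = 0`. -/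
theorem killing_field_constant_iff_el
    (X : ℝ → ℝ × ℝ) (κ : ℝ → ℝ)
    (hX : ContDiff ℝ (⊤ : ℕ∞) X) (hκsmooth : ContDiff ℝ (⊤ : ℕ∞) κ)
    (hunit : ∀ s : ℝ, (deriv X s).1 ^ 2 + (deriv X s).2 ^ 2 = 1)
    (hfrenet : ∀ s : ℝ, deriv (deriv X) s = κ s • (-(deriv X s).2, (deriv X s).1))
    (hpos : ∀ s : ℝ, 0 < κ s)
    (P : ℝ → ℝ) (hP : ContDiffOn ℝ (⊤ : ℕ∞) P (Set.Ioi 0)) :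
    (∀ s : ℝ,
      deriv (fun t =>
        (κ t * deriv P (κ t) - P (κ t)) • deriv X t
          + (deriv (fun u => deriv P (κ u)) t) •
              ((-(deriv X t).2, (deriv X t).1) : ℝ × ℝ)) s = 0) ↔
    (∀ s : ℝ,
      deriv (deriv (fun t => deriv P (κ t))) s
        + κ s ^ 2 * deriv P (κ s) - κ s * P (κ s) = 0) := by
  -- downgrade smoothness to ∞
  have hle : (∞ : WithTop ℕ∞) ≠ 0 := by simp
  have hX' : ContDiff ℝ ∞ X := hX.of_le (by simp)
  have hκ : ContDiff ℝ ∞ κ := hκsmooth.of_le (by simp)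
  have hPinf : ContDiffOn ℝ ∞ P (Set.Ioi 0) := hP.of_le (by simp)
  set T : ℝ → ℝ × ℝ := deriv X with hTdef
  have hT : ContDiff ℝ ∞ T := (contDiff_infty_iff_deriv.1 hX').2
  set N : ℝ → ℝ × ℝ := fun t => (-(T t).2, (T t).1) with hNdef
  have hNrot : ∀ t, N t = rot (T t) := fun t => rfl
  -- derivative of T
  have hT' : ∀ s, HasDerivAt T (κ s • N s) s := by
    intro s
    have := (hT.differentiable hle s).hasDerivAt
    rwa [hfrenet s] at this
  -- derivative of N
  have hN' : ∀ s, HasDerivAt N ((-(κ s)) • T s) s := by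
    intro s
    have h := rot.hasFDerivAt.comp_hasDerivAt s (hT' s)
    have : rot (κ s • N s) = (-(κ s)) • T s := by
      rw [map_smul, hNrot, rot_apply, rot_apply]
      exact Prod.ext (by simp) (by simp)
    rwa [this] at h
  -- deriv P is smooth on Ioi 0
  have hP1 : ContDiffOn ℝ ∞ (deriv P) (Set.Ioi 0) :=
    hPinf.deriv_of_isOpen isOpen_Ioi (by exact_mod_cast le_top)
  set f : ℝ → ℝ := fun t => deriv P (κ t) with hfdef
  have hf : ContDiff ℝ ∞ f := by
    rw [contDiff_iff_contDiffAt]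
    intro s
    exact ((hP1.contDiffAt (Ioi_mem_nhds (hpos s))).comp s (hκ.contDiffAt)).of_le le_rfl
  -- derivative of P ∘ κ
  have hPκ : ∀ s, HasDerivAt (fun t => P (κ t)) (f s * deriv κ s) s := by
    intro s
    have hPat : HasDerivAt P (deriv P (κ s)) (κ s) :=
      (((hPinf.contDiffAt (Ioi_mem_nhds (hpos s))).differentiableAt (by
        simp))).hasDerivAt
    exact hPat.comp s (hκ.differentiable hle s).hasDerivAt
  set g : ℝ → ℝ := fun t => κ t * f t - P (κ t) with hgdef
  have hg' : ∀ s, HasDerivAt g (κ s * deriv f s) s := by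
    intro s
    have hκd : HasDerivAt κ (deriv κ s) s := (hκ.differentiable hle s).hasDerivAt
    have hfd : HasDerivAt f (deriv f s) s := (hf.differentiable hle s).hasDerivAt
    have := (hκd.mul hfd).sub (hPκ s)
    have heq : deriv κ s * f s + κ s * deriv f s - f s * deriv κ s = κ s * deriv f s := by ring
    rwa [heq] at this
  have hf' : ContDiff ℝ ∞ (deriv f) := (contDiff_infty_iff_deriv.1 hf).2
  -- derivative of J
  have hJ : ∀ s, deriv (fun t => g t • T t + deriv f t • N t) s
      = (deriv (deriv f) s + κ s * g s) • N s := by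
    intro s
    have h1 := (hg' s).smul (hT' s)
    have h2 := ((hf'.differentiable hle s).hasDerivAt).smul (hN' s)
    have h := (h1.add h2).deriv
    rw [show (fun t => g t • T t + deriv f t • N t) = g • T + deriv f • N from rfl, h]
    simp only [smul_smul, smul_add, add_smul]
    module
  -- N never vanishes
  have hNne : ∀ s, N s ≠ 0 := by
    intro s hs
    have h1 : (T s).1 = 0 := congrArg Prod.snd hs
    have h2 : (T s).2 = 0 := by
      have := congrArg Prod.fst hs
      simpa [hNdef] using this
    have h3 := hunit s
    rw [h1, h2] at h3
    norm_num at h3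
  constructor
  · intro h s
    have := h s
    rw [hJ s] at this
    rcases smul_eq_zero.1 this with h0 | h0
    · have : deriv (deriv f) s + κ s ^ 2 * f s - κ s * P (κ s) = 0 := by
        rw [hgdef] at h0; simp only at h0; nlinarith [h0]
      exact this
    · exact absurd h0 (hNne s)
  · intro h s
    rw [hJ s]
    have h0 : deriv (deriv f) s + κ s * g s = 0 := by
      have := h s
      rw [hgdef]; simp only; nlinarith [this]
    rw [h0, zero_smul]
end

section
/- Let X : ℝ → ℝ² be a smooth unit-speed curve with unit tangent T = X', unit normal N (the counter-clockwise rotation of T by π/2) and signed curvature κ defined by T' = κN. Assume κ(s) > 0 for all s, κ is not a constant function, and let a ≠ 0. Then there exists a constant vector V ∈ ℝ² such that κ(s) = a⟨N(s), V⟩ for all s (i.e., X is a translating soliton to the curve shortening flow) if and only if κ satisfies the Euler–Lagrange equation of the functional Θ_{1,0}(γ) = ∫_γ κ log κ, namely (d²/ds²)(log κ(s)) + κ(s)² = 0 for all s. -/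
lemma myHasDerivAt_fst {g : ℝ → ℝ × ℝ} {g' : ℝ × ℝ} {x : ℝ} (h : HasDerivAt g g' x) :
    HasDerivAt (fun s => (g s).1) g'.1 x := by
  simpa using (h.hasFDerivAt.fst).hasDerivAt

lemma myHasDerivAt_snd {g : ℝ → ℝ × ℝ} {g' : ℝ × ℝ} {x : ℝ} (h : HasDerivAt g g' x) :
    HasDerivAt (fun s => (g s).2) g'.2 x := by
  simpa using (h.hasFDerivAt.snd).hasDerivAt

/-- A smooth unit-speed plane curve with positive nonconstant curvature is a
translating soliton to the curve shortening flow `∂X/∂t = (1/a)κN` (i.e. a grim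
reaper) if and only if its curvature satisfies the Euler–Lagrange equation of
the functional `Θ_{1,0}(γ) = ∫_γ κ log κ`. -/
theorem grim_reaper_variational_characterization
    (X : ℝ → ℝ × ℝ) (κ : ℝ → ℝ) (a : ℝ)
    (hX : ContDiff ℝ (⊤ : ℕ∞) X) (hκsmooth : ContDiff ℝ (⊤ : ℕ∞) κ)
    (hunit : ∀ s : ℝ, (deriv X s).1 ^ 2 + (deriv X s).2 ^ 2 = 1)
    (hfrenet : ∀ s : ℝ, deriv (deriv X) s = κ s • (-(deriv X s).2, (deriv X s).1))
    (hpos : ∀ s : ℝ, 0 < κ s)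
    (hnonconst : ∃ s₁ s₂ : ℝ, κ s₁ ≠ κ s₂)
    (ha : a ≠ 0) :
    (∃ V : ℝ × ℝ, ∀ s : ℝ,
        κ s = a * ((-(deriv X s).2) * V.1 + (deriv X s).1 * V.2)) ↔
      (∀ s : ℝ, deriv (deriv (fun t => Real.log (κ t))) s + κ s ^ 2 = 0) := by
  set T₁ : ℝ → ℝ := fun s => (deriv X s).1 with hT₁def
  set T₂ : ℝ → ℝ := fun s => (deriv X s).2 with hT₂def
  have hdX : Differentiable ℝ (deriv X) :=
    ((contDiff_infty_iff_deriv.mp (hX.of_le (by simp))).2).differentiable (by simp)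
  have hT1' : ∀ s, HasDerivAt T₁ (κ s * (-(T₂ s))) s := by
    intro s
    have h := myHasDerivAt_fst ((hdX s).hasDerivAt)
    rw [hfrenet s] at h
    simpa using h
  have hT2' : ∀ s, HasDerivAt T₂ (κ s * T₁ s) s := by
    intro s
    have h := myHasDerivAt_snd ((hdX s).hasDerivAt)
    rw [hfrenet s] at h
    simpa using h
  have hκdiff : Differentiable ℝ κ := hκsmooth.differentiable (by simp)
  constructor
  · rintro ⟨V, hV⟩ s
    have hκ' : ∀ t, HasDerivAt κ (-(a * κ t * (T₁ t * V.1 + T₂ t * V.2))) t := by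
      intro t
      have h1 : HasDerivAt (fun u => a * ((-(T₂ u)) * V.1 + T₁ u * V.2))
          (a * ((-(κ t * T₁ t)) * V.1 + (κ t * (-(T₂ t))) * V.2)) t :=
        (((hT2' t).neg.mul_const V.1).add ((hT1' t).mul_const V.2)).const_mul a
      have h2 : HasDerivAt κ (a * ((-(κ t * T₁ t)) * V.1 + (κ t * (-(T₂ t))) * V.2)) t :=
        h1.congr_of_eventuallyEq (Filter.Eventually.of_forall hV)
      convert h2 using 1; ring
    have hlog' : ∀ t, HasDerivAt (fun u => Real.log (κ u))
        (-(a * (T₁ t * V.1 + T₂ t * V.2))) t := by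
      intro t
      have h := (hκ' t).log (hpos t).ne'
      convert h using 1
      rw [eq_div_iff (hpos t).ne']
      ring
    have hlogeq : deriv (fun u => Real.log (κ u))
        = fun t => -(a * (T₁ t * V.1 + T₂ t * V.2)) := funext fun t => (hlog' t).deriv
    rw [hlogeq]
    have h2' : HasDerivAt (fun t => -(a * (T₁ t * V.1 + T₂ t * V.2)))
        (-(a * ((κ s * (-(T₂ s))) * V.1 + (κ s * T₁ s) * V.2))) s :=
      ((((hT1' s).mul_const V.1).add ((hT2' s).mul_const V.2)).const_mul a).neg
    rw [h2'.deriv]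
    simp only [hT₁def, hT₂def]
    linear_combination (κ s) * hV s
  · intro h
    set f : ℝ → ℝ := fun t => deriv κ t / κ t with hfdef
    have hlogeq : deriv (fun t => Real.log (κ t)) = f := by
      funext t
      exact ((hκdiff t).hasDerivAt.log (hpos t).ne').deriv
    have hdκdiff : Differentiable ℝ (deriv κ) :=
      ((contDiff_infty_iff_deriv.mp (hκsmooth.of_le (by simp))).2).differentiable (by simp)
    have hfdiff : Differentiable ℝ f :=
      hdκdiff.div hκdiff fun t => (hpos t).ne'
    have hf' : ∀ t, HasDerivAt f (-(κ t ^ 2)) t := by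
      intro t
      have ht := h t
      rw [hlogeq] at ht
      have hd : deriv f t = -(κ t ^ 2) := by linarith
      exact hd ▸ (hfdiff t).hasDerivAt
    have hfκ : ∀ t, f t * κ t = deriv κ t := by
      intro t
      rw [hfdef]
      rw [div_mul_cancel₀]
      exact (hpos t).ne'
    set W₁ : ℝ → ℝ := fun t => κ t * (-(T₂ t)) - f t * T₁ t with hW₁def
    set W₂ : ℝ → ℝ := fun t => κ t * T₁ t - f t * T₂ t with hW₂def
    have hW₁' : ∀ t, HasDerivAt W₁ 0 t := by
      intro t
      have h1 : HasDerivAt W₁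
          ((deriv κ t * (-(T₂ t)) + κ t * (-(κ t * T₁ t)))
            - ((-(κ t ^ 2)) * T₁ t + f t * (κ t * (-(T₂ t))))) t :=
        ((hκdiff t).hasDerivAt.mul (hT2' t).neg).sub ((hf' t).mul (hT1' t))
      convert h1 using 1
      linear_combination (-(T₂ t)) * hfκ t
    have hW₂' : ∀ t, HasDerivAt W₂ 0 t := by
      intro t
      have h1 : HasDerivAt W₂
          ((deriv κ t * T₁ t + κ t * (κ t * (-(T₂ t))))
            - ((-(κ t ^ 2)) * T₂ t + f t * (κ t * T₁ t))) t :=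
        ((hκdiff t).hasDerivAt.mul (hT1' t)).sub ((hf' t).mul (hT2' t))
      convert h1 using 1
      linear_combination (T₁ t) * hfκ t
    have hW₁const : ∀ t, W₁ t = W₁ 0 :=
      fun t => is_const_of_deriv_eq_zero (fun u => (hW₁' u).differentiableAt)
        (fun u => (hW₁' u).deriv) t 0
    have hW₂const : ∀ t, W₂ t = W₂ 0 :=
      fun t => is_const_of_deriv_eq_zero (fun u => (hW₂' u).differentiableAt)
        (fun u => (hW₂' u).deriv) t 0
    refine ⟨((1/a) * W₁ 0, (1/a) * W₂ 0), fun s => ?_⟩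
    have hcancel : ∀ x y : ℝ, a * (x * (1/a * y)) = x * y := by
      intro x y; field_simp
    show κ s = a * ((-(deriv X s).2) * ((1/a) * W₁ 0) + (deriv X s).1 * ((1/a) * W₂ 0))
    rw [mul_add, hcancel, hcancel, ← hW₁const s, ← hW₂const s]
    simp only [hW₁def, hW₂def, hT₁def, hT₂def]
    linear_combination (-(κ s)) * hunit s
end

section
/- Let X : ℝ → ℝ² be a smooth unit-speed curve with unit tangent T = X', unit normal N (the counter-clockwise rotation of T by π/2) and signed curvature κ defined by T' = κN. Assume κ(s) > 0 for all s, κ is not a constant function, and let a ≠ 0 and b ∈ ℝ. Then there exists a constant vector V ∈ ℝ² such that log(κ(s)) + b = a⟨N(s), V⟩ for all s (i.e., X is a translating soliton to the logarithmic curvature flow ∂X/∂t = (1/a)(log κ + b)N) if and only if κ satisfies the Euler–Lagrange equation of the functional ∫_γ (log κ + λ) with λ = b + 1, namely (d²/ds²)(1/κ(s)) + κ(s) − κ(s)log(κ(s)) − λκ(s) = 0 for all s. -/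
/-- A smooth unit-speed plane curve with positive nonconstant curvature is a
translating soliton to the logarithmic curvature flow
`∂X/∂t = (1/a)(log κ + b)N` if and only if its curvature satisfies the
Euler–Lagrange equation of the functional `∫_γ (log κ + λ)` with `λ = b + 1`. -/
theorem translating_soliton_log_flow_iff
    (X : ℝ → ℝ × ℝ) (κ : ℝ → ℝ) (a b : ℝ)
    (hX : ContDiff ℝ (⊤ : ℕ∞) X) (hκsmooth : ContDiff ℝ (⊤ : ℕ∞) κ)
    (hunit : ∀ s : ℝ, (deriv X s).1 ^ 2 + (deriv X s).2 ^ 2 = 1)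
    (hfrenet : ∀ s : ℝ, deriv (deriv X) s = κ s • (-(deriv X s).2, (deriv X s).1))
    (hpos : ∀ s : ℝ, 0 < κ s)
    (hnonconst : ∃ s₁ s₂ : ℝ, κ s₁ ≠ κ s₂)
    (ha : a ≠ 0) :
    (∃ V : ℝ × ℝ, ∀ s : ℝ,
        Real.log (κ s) + b = a * ((-(deriv X s).2) * V.1 + (deriv X s).1 * V.2)) ↔
      (∀ s : ℝ,
        deriv (deriv (fun t => (κ t)⁻¹)) s + κ s - κ s * Real.log (κ s)
          - (b + 1) * κ s = 0) := by
  -- basic smoothness facts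
  have hXi : ContDiff ℝ (↑(⊤:ℕ∞)) X := hX.of_le (by simp)
  have hκi : ContDiff ℝ (↑(⊤:ℕ∞)) κ := hκsmooth.of_le (by simp)
  have hone : (1 : WithTop ℕ∞) ≤ ↑(⊤:ℕ∞) := by exact_mod_cast le_top
  have hX' : Differentiable ℝ (deriv X) :=
    ((contDiff_infty_iff_deriv.mp hXi).2).differentiable (by simp)
  have hκd : Differentiable ℝ κ := hκi.differentiable (by simp)
  have hκ'd : Differentiable ℝ (deriv κ) :=
    ((contDiff_infty_iff_deriv.mp hκi).2).differentiable (by simp)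
  have hκne : ∀ s, κ s ≠ 0 := fun s => (hpos s).ne'
  set T1 : ℝ → ℝ := fun s => (deriv X s).1 with hT1def
  set T2 : ℝ → ℝ := fun s => (deriv X s).2 with hT2def
  -- derivatives of tangent components
  have hdT1 : ∀ s, HasDerivAt T1 (-(κ s * T2 s)) s := by
    intro s
    have h := ((hX' s).hasFDerivAt.fst).hasDerivAt
    simp only [ContinuousLinearMap.coe_comp', Function.comp_apply] at h
    rw [fderiv_apply_one_eq_deriv, hfrenet s] at h
    simpa [T1, T2, mul_comm] using h
  have hdT2 : ∀ s, HasDerivAt T2 (κ s * T1 s) s := by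
    intro s
    have h := ((hX' s).hasFDerivAt.snd).hasDerivAt
    simp only [ContinuousLinearMap.coe_comp', Function.comp_apply] at h
    rw [fderiv_apply_one_eq_deriv, hfrenet s] at h
    simpa [T1, T2, mul_comm] using h
  -- derivative of κ and log κ
  have hdκ : ∀ s, HasDerivAt κ (deriv κ s) s := fun s => (hκd s).hasDerivAt
  have hdsq : ∀ s, HasDerivAt (fun s => κ s ^ 2) (2 * κ s * deriv κ s) s := by
    intro s; simpa using (hdκ s).fun_pow 2
  have hdlog : ∀ s, HasDerivAt (fun s => Real.log (κ s) + b)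
      ((κ s)⁻¹ * deriv κ s) s := by
    intro s
    exact ((Real.hasDerivAt_log (hκne s)).comp s (hdκ s)).add_const b
  -- second derivative of 1/κ
  have hdinv : ∀ s, HasDerivAt (fun t => (κ t)⁻¹) (-(deriv κ s) / (κ s)^2) s :=
    fun s => (hdκ s).inv (hκne s)
  have hinv_eq : deriv (fun t => (κ t)⁻¹) = fun s => -(deriv κ s) / (κ s)^2 := by
    funext s; exact (hdinv s).deriv
  have hdg : ∀ s, HasDerivAt (fun s => -(deriv κ s) / (κ s)^2)
      ((-(deriv (deriv κ) s) * (κ s)^2 - (-(deriv κ s)) * (2 * κ s * deriv κ s)) / ((κ s)^2) ^ 2) s := by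
    intro s
    exact ((hκ'd s).hasDerivAt.neg).div (hdsq s) (pow_ne_zero 2 (hκne s))
  have hdinv2 : ∀ s, deriv (deriv (fun t => (κ t)⁻¹)) s =
      (-(deriv (deriv κ) s) * (κ s)^2 + deriv κ s * (2 * κ s * deriv κ s)) / ((κ s)^2)^2 := by
    intro s
    rw [hinv_eq, (hdg s).deriv]
    ring_nf
  -- EL equation is equivalent to the polynomial equation (star)
  have hELiff : (∀ s, deriv (deriv (fun t => (κ t)⁻¹)) s + κ s - κ s * Real.log (κ s)
          - (b + 1) * κ s = 0) ↔
      (∀ s, deriv (deriv κ) s * κ s - 2 * (deriv κ s)^2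
          + (κ s)^4 * (Real.log (κ s) + b) = 0) := by
    have key : ∀ s, deriv (deriv (fun t => (κ t)⁻¹)) s + κ s - κ s * Real.log (κ s)
          - (b + 1) * κ s =
        -(deriv (deriv κ) s * κ s - 2 * (deriv κ s)^2
          + (κ s)^4 * (Real.log (κ s) + b)) / (κ s)^3 := by
      intro s
      have hκs := hκne s
      rw [hdinv2 s]
      field_simp
      ring
    constructor
    · intro h s
      have h0 := h s
      rw [key s] at h0
      have h3 : (κ s)^3 ≠ 0 := pow_ne_zero 3 (hκne s)
      field_simp at h0
      exact (div_eq_zero_iff.mp (neg_eq_zero.mp h0)).resolve_right h3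
    · intro h s
      rw [key s, h s]
      simp
  rw [hELiff]
  constructor
  · -- soliton → star equation
    rintro ⟨V, hV⟩
    intro s
    -- first derivative of the soliton identity
    have e1 : ∀ s, (κ s)⁻¹ * deriv κ s
        = a * (-(κ s * T1 s) * V.1 + (-(κ s * T2 s)) * V.2) := by
      intro s
      have hR : HasDerivAt (fun s => a * ((-(T2 s)) * V.1 + T1 s * V.2))
          (a * (-(κ s * T1 s) * V.1 + (-(κ s * T2 s)) * V.2)) s := by
        exact ((((hdT2 s).neg.mul_const V.1).add ((hdT1 s).mul_const V.2)).const_mul a)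
      have hfun : (fun s => Real.log (κ s) + b)
          = fun s => a * ((-(T2 s)) * V.1 + T1 s * V.2) := funext fun s => hV s
      have hL := hdlog s
      rw [hfun] at hL
      exact hL.unique hR
    -- second derivative
    have e2 : HasDerivAt (fun s => (κ s)⁻¹ * deriv κ s)
        (a * ((-(deriv κ s * T1 s + κ s * (-(κ s * T2 s)))) * V.1
          + (-(deriv κ s * T2 s + κ s * (κ s * T1 s))) * V.2)) s := by
      have hR : HasDerivAt (fun s => a * (-(κ s * T1 s) * V.1 + (-(κ s * T2 s)) * V.2))
          (a * ((-(deriv κ s * T1 s + κ s * (-(κ s * T2 s)))) * V.1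
          + (-(deriv κ s * T2 s + κ s * (κ s * T1 s))) * V.2)) s := by
        exact (((((hdκ s).mul (hdT1 s)).neg.mul_const V.1).add
          ((((hdκ s).mul (hdT2 s)).neg).mul_const V.2)).const_mul a)
      have hfun : (fun s => (κ s)⁻¹ * deriv κ s)
          = fun s => a * (-(κ s * T1 s) * V.1 + (-(κ s * T2 s)) * V.2) :=
        funext fun s => e1 s
      rw [hfun]; exact hR
    have e2' : HasDerivAt (fun s => (κ s)⁻¹ * deriv κ s)
        (-(deriv κ s) / (κ s)^2 * deriv κ s + (κ s)⁻¹ * deriv (deriv κ) s) s :=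
      (hdinv s).mul (hκ'd s).hasDerivAt
    have e3 := e2'.unique e2
    -- now pure algebra
    have hVs := hV s
    have hP := e1 s
    have hκs := hκne s
    field_simp at e3 hP
    have hm : κ s * (deriv (deriv κ) s * κ s - 2 * (deriv κ s)^2
        + (κ s)^4 * (Real.log (κ s) + b)) = 0 := by
      linear_combination κ s * e3 + (κ s)^5 * hVs - (deriv κ s * κ s) * hP
    exact (mul_eq_zero.mp hm).resolve_left hκs
  · -- star equation → soliton
    intro hstar
    set f : ℝ → ℝ := fun s => Real.log (κ s) + b with hfdef
    set g : ℝ → ℝ := fun s => -(deriv κ s) / (κ s)^2 with hgdef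
    set W1 : ℝ → ℝ := fun s => (f s * (-(T2 s)) + g s * T1 s) / a with hW1def
    set W2 : ℝ → ℝ := fun s => (f s * T1 s + g s * T2 s) / a with hW2def
    have hW1' : ∀ s, HasDerivAt W1 0 s := by
      intro s
      have h : HasDerivAt W1
          ((((κ s)⁻¹ * deriv κ s) * (-(T2 s)) + f s * (-(κ s * T1 s))
            + (((-(deriv (deriv κ) s) * (κ s)^2 - (-(deriv κ s)) * (2 * κ s * deriv κ s)) / ((κ s)^2)^2) * T1 s
            + g s * (-(κ s * T2 s)))) / a) s := by
        exact ((((hdlog s).mul (hdT2 s).neg).add ((hdg s).mul (hdT1 s))).div_const a)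
      convert h using 1
      have hs := hstar s
      have hκs := hκne s
      simp only [g, f]
      field_simp
      linear_combination (T1 s) * hs
    have hW2' : ∀ s, HasDerivAt W2 0 s := by
      intro s
      have h : HasDerivAt W2
          ((((κ s)⁻¹ * deriv κ s) * T1 s + f s * (-(κ s * T2 s))
            + (((-(deriv (deriv κ) s) * (κ s)^2 - (-(deriv κ s)) * (2 * κ s * deriv κ s)) / ((κ s)^2)^2) * T2 s
            + g s * (κ s * T1 s))) / a) s := by
        exact ((((hdlog s).mul (hdT1 s)).add ((hdg s).mul (hdT2 s))).div_const a)
      convert h using 1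
      have hs := hstar s
      have hκs := hκne s
      simp only [g, f]
      field_simp
      linear_combination (T2 s) * hs
    have hW1c : ∀ s, W1 s = W1 0 := fun s =>
      is_const_of_deriv_eq_zero (fun t => (hW1' t).differentiableAt)
        (fun t => (hW1' t).deriv) s 0
    have hW2c : ∀ s, W2 s = W2 0 := fun s =>
      is_const_of_deriv_eq_zero (fun t => (hW2' t).differentiableAt)
        (fun t => (hW2' t).deriv) s 0
    refine ⟨(W1 0, W2 0), fun s => ?_⟩
    rw [← hW1c s, ← hW2c s]
    have hu := hunit s
    simp only [hW1def, hW2def, hfdef]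
    field_simp
    linear_combination (-(Real.log (κ s) + b)) * hu
end

section
/- Let X : ℝ → ℝ² be a smooth unit-speed curve with unit tangent T = X', unit normal N (the counter-clockwise rotation of T by π/2) and signed curvature κ defined by T' = κN. If there is a constant vector V ∈ ℝ² with V ≠ 0 such that the function s ↦ ⟨N(s), V⟩ is constant on ℝ, then κ(s) = 0 for all s, i.e., X is a straight line. -/
/-- If along a smooth unit-speed plane curve the inner product of the unit
normal with some fixed nonzero vector `V` is constant, then the curvature
vanishes identically, i.e. the curve is a straight line. -/
theorem constant_normal_component_implies_line
    (X : ℝ → ℝ × ℝ) (κ : ℝ → ℝ)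
    (hX : ContDiff ℝ (⊤ : ℕ∞) X)
    (hunit : ∀ s : ℝ, (deriv X s).1 ^ 2 + (deriv X s).2 ^ 2 = 1)
    (hfrenet : ∀ s : ℝ, deriv (deriv X) s = κ s • (-(deriv X s).2, (deriv X s).1))
    (V : ℝ × ℝ) (hV : V ≠ 0)
    (hconst : ∃ c : ℝ, ∀ s : ℝ,
      (-(deriv X s).2) * V.1 + (deriv X s).1 * V.2 = c) :
    ∀ s : ℝ, κ s = 0 := by
  obtain ⟨c, hc⟩ := hconst
  set T : ℝ → ℝ × ℝ := deriv X with hT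
  have hXinf : ContDiff ℝ ((⊤ : ℕ∞) : WithTop ℕ∞) X := hX.of_le (by simp)
  have hTsm : ContDiff ℝ ((⊤ : ℕ∞) : WithTop ℕ∞) T := (contDiff_infty_iff_deriv.mp hXinf).2
  have hTd : Differentiable ℝ T := (contDiff_infty_iff_deriv.mp hTsm).1
  -- derivative facts for components of T
  have hD : ∀ s : ℝ, HasDerivAt T (κ s • (-(T s).2, (T s).1)) s := by
    intro s
    have := (hTd s).hasDerivAt
    rwa [show deriv T s = κ s • (-(T s).2, (T s).1) from hfrenet s] at this
  have h1 : ∀ s : ℝ, HasDerivAt (fun t => (T t).1) (-(κ s * (T s).2)) s := by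
    intro s
    have := (hasFDerivAt_fst.comp_hasDerivAt s (hD s))
    simp at this
    exact this
  have h2 : ∀ s : ℝ, HasDerivAt (fun t => (T t).2) (κ s * (T s).1) s := by
    intro s
    have := (hasFDerivAt_snd.comp_hasDerivAt s (hD s))
    simp at this
    exact this
  -- f = ⟨T, V⟩
  set f : ℝ → ℝ := fun t => (T t).1 * V.1 + (T t).2 * V.2 with hf
  have hfD : ∀ s : ℝ, HasDerivAt f (κ s * ((-(T s).2) * V.1 + (T s).1 * V.2)) s := by
    intro s
    have := ((h1 s).mul_const V.1).add ((h2 s).mul_const V.2)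
    refine this.congr_deriv ?_
    ring
  -- g = ⟨N, V⟩ is constant, so its derivative vanishes: κ·f ≡ 0
  have hgD : ∀ s : ℝ, HasDerivAt (fun t => (-(T t).2) * V.1 + (T t).1 * V.2)
      (-(κ s * f s)) s := by
    intro s
    have := (((h2 s).neg).mul_const V.1).add ((h1 s).mul_const V.2)
    refine this.congr_deriv ?_
    simp only [hf]; ring
  have hkf : ∀ s : ℝ, κ s * f s = 0 := by
    intro s
    have hconstfun : (fun t => (-(T t).2) * V.1 + (T t).1 * V.2) = fun _ => c := by
      funext t; exact hc t
    have h0 : HasDerivAt (fun t => (-(T t).2) * V.1 + (T t).1 * V.2) 0 s := by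
      rw [hconstfun]; exact hasDerivAt_const s c
    have := (hgD s).unique h0
    linarith
  -- algebraic identity: f² = |V|² − c²
  have hfsq : ∀ s : ℝ, f s ^ 2 = (V.1 ^ 2 + V.2 ^ 2) - c ^ 2 := by
    intro s
    have h := hc s
    have hu := hunit s
    have key : f s ^ 2 = (V.1 ^ 2 + V.2 ^ 2) - ((-(T s).2) * V.1 + (T s).1 * V.2) ^ 2 := by
      simp only [hf]
      linear_combination (V.1 ^ 2 + V.2 ^ 2) * hu
    rw [h] at key
    exact key
  intro s
  by_contra hks
  have hfs : f s = 0 := by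
    rcases mul_eq_zero.mp (hkf s) with h | h
    · exact absurd h hks
    · exact h
  have hcsq : c ^ 2 = V.1 ^ 2 + V.2 ^ 2 := by
    have := hfsq s
    rw [hfs] at this
    nlinarith
  have hVpos : 0 < V.1 ^ 2 + V.2 ^ 2 := by
    rcases Prod.mk.injEq V.1 V.2 0 0 ▸ (fun h => hV h) with _
    by_contra h
    push_neg at h
    have h1 : V.1 = 0 := by nlinarith [sq_nonneg V.1, sq_nonneg V.2]
    have h2 : V.2 = 0 := by nlinarith [sq_nonneg V.1, sq_nonneg V.2]
    exact hV (Prod.ext h1 h2)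
  have hcne : c ≠ 0 := by
    intro h; rw [h] at hcsq; nlinarith
  -- f ≡ 0, so its derivative κ·c vanishes, contradiction
  have hf0 : f = fun _ => (0 : ℝ) := by
    funext t
    have := hfsq t
    rw [← hcsq] at this
    have : f t ^ 2 = 0 := by linarith
    exact pow_eq_zero_iff (by norm_num) |>.mp this
  have h0 : HasDerivAt f 0 s := by rw [hf0]; exact hasDerivAt_const s 0
  have hval : κ s * ((-(T s).2) * V.1 + (T s).1 * V.2) = 0 := (hfD s).unique h0
  rw [hc s] at hval
  exact hks ((mul_eq_zero.mp hval).resolve_right hcne)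
end

section
/- Let c > 0 and define κ : ℝ → ℝ by κ(s) = c/(c² + s²). Then κ is positive and satisfies the Euler–Lagrange equation of the functional Θ_{1/2,0}(γ) = ∫_γ κ^{1/2}, namely (d²/ds²)((1/2)κ(s)^{−1/2}) + κ(s)²·(1/2)κ(s)^{−1/2} − κ(s)·κ(s)^{1/2} = 0 for all s; equivalently, (d²/ds²)(κ(s)^{−1/2}) = κ(s)^{3/2} for all s. This κ is the curvature of a catenary, the translating soliton to the flow with p = 1/2 and b = 0. -/
private lemma cat_first_deriv (c : ℝ) (hc : 0 < c) :
    deriv (fun t : ℝ => (c ^ 2 + t ^ 2) ^ ((1/2 : ℝ)) * c ^ (-(1/2) : ℝ))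
      = fun t : ℝ => t * (c ^ 2 + t ^ 2) ^ (-(1/2) : ℝ) * c ^ (-(1/2) : ℝ) := by
  funext t
  have hu : (0:ℝ) < c ^ 2 + t ^ 2 := by positivity
  have hd : HasDerivAt (fun t : ℝ => c ^ 2 + t ^ 2) (2 * t) t := by
    have := ((hasDerivAt_pow 2 t).const_add (c ^ 2))
    simpa using this
  have h1 : HasDerivAt (fun t : ℝ => (c ^ 2 + t ^ 2) ^ ((1/2 : ℝ)))
      (2 * t * (1/2) * (c ^ 2 + t ^ 2) ^ ((1/2 : ℝ) - 1)) t :=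
    hd.rpow_const (Or.inl (ne_of_gt hu))
  have h2 := h1.mul_const (c ^ (-(1/2) : ℝ))
  rw [h2.deriv]
  have : ((1/2 : ℝ) - 1) = -(1/2 : ℝ) := by norm_num
  rw [this]; ring

private lemma cat_second_deriv (c : ℝ) (hc : 0 < c) (s : ℝ) :
    deriv (deriv (fun t : ℝ => (c ^ 2 + t ^ 2) ^ ((1/2 : ℝ)) * c ^ (-(1/2) : ℝ))) s
      = c ^ ((3/2) : ℝ) * (c ^ 2 + s ^ 2) ^ (-(3/2) : ℝ) := by
  rw [cat_first_deriv c hc]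
  have hu : (0:ℝ) < c ^ 2 + s ^ 2 := by positivity
  have hd : HasDerivAt (fun t : ℝ => c ^ 2 + t ^ 2) (2 * s) s := by
    have := ((hasDerivAt_pow 2 s).const_add (c ^ 2))
    simpa using this
  have h1 : HasDerivAt (fun t : ℝ => (c ^ 2 + t ^ 2) ^ (-(1/2) : ℝ))
      (2 * s * (-(1/2)) * (c ^ 2 + s ^ 2) ^ ((-(1/2) : ℝ) - 1)) s :=
    hd.rpow_const (Or.inl (ne_of_gt hu))
  have h2 : HasDerivAt (fun t : ℝ => t * (c ^ 2 + t ^ 2) ^ (-(1/2) : ℝ) * c ^ (-(1/2) : ℝ))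
      ((1 * (c ^ 2 + s ^ 2) ^ (-(1/2) : ℝ)
        + s * (2 * s * (-(1/2)) * (c ^ 2 + s ^ 2) ^ ((-(1/2) : ℝ) - 1))) * c ^ (-(1/2) : ℝ)) s := by
    simpa using ((hasDerivAt_id s).mul h1).mul_const (c ^ (-(1/2) : ℝ))
  rw [h2.deriv]
  have e1 : ((-(1/2) : ℝ) - 1) = -(3/2 : ℝ) := by norm_num
  rw [e1]
  have e2 : (c ^ 2 + s ^ 2) ^ (-(1/2) : ℝ)
      = (c ^ 2 + s ^ 2) * (c ^ 2 + s ^ 2) ^ (-(3/2) : ℝ) := by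
    rw [← Real.rpow_one_add' hu.le (by norm_num)]
    norm_num
  have e3 : c ^ ((3/2) : ℝ) = c ^ 2 * c ^ (-(1/2) : ℝ) := by
    rw [← Real.rpow_natCast c 2, ← Real.rpow_add hc]
    norm_num
  rw [e2, e3]; ring

/-- The function `κ(s) = c/(c² + s²)` is positive and satisfies the
Euler–Lagrange equation of the functional `Θ_{1/2,0}(γ) = ∫_γ κ^{1/2}`, namely
`((1/2)κ^{-1/2})'' + κ²(1/2)κ^{-1/2} - κ·κ^{1/2} = 0`; equivalently,
`(κ^{-1/2})'' = κ^{3/2}`. (This `κ` is the curvature of a catenary, the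
translating soliton to the flow with `p = 1/2`, `b = 0`.) -/
theorem catenary_curvature_satisfies_el
    (c : ℝ) (hc : 0 < c) (κ : ℝ → ℝ)
    (hκ : ∀ s : ℝ, κ s = c / (c ^ 2 + s ^ 2)) :
    ∀ s : ℝ,
      0 < κ s ∧
      deriv (deriv (fun t => (1 / 2) * κ t ^ (-(1 / 2) : ℝ))) s
        + κ s ^ 2 * ((1 / 2) * κ s ^ (-(1 / 2) : ℝ))
        - κ s * κ s ^ ((1 / 2) : ℝ) = 0 ∧
      deriv (deriv (fun t => κ t ^ (-(1 / 2) : ℝ))) s = κ s ^ ((3 / 2) : ℝ) := by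
  have hupos : ∀ t : ℝ, (0:ℝ) < c ^ 2 + t ^ 2 := fun t => by positivity
  have hκpos : ∀ t : ℝ, 0 < κ t := fun t => by
    rw [hκ]; exact div_pos hc (hupos t)
  have hfun : (fun t => κ t ^ (-(1/2) : ℝ))
      = fun t : ℝ => (c ^ 2 + t ^ 2) ^ ((1/2 : ℝ)) * c ^ (-(1/2) : ℝ) := by
    funext t
    rw [hκ, Real.rpow_neg (div_nonneg hc.le (hupos t).le),
      Real.div_rpow hc.le (hupos t).le, Real.rpow_neg hc.le]
    field_simp
  have hκ32 : ∀ s : ℝ, κ s ^ ((3/2) : ℝ)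
      = c ^ ((3/2) : ℝ) * (c ^ 2 + s ^ 2) ^ (-(3/2) : ℝ) := by
    intro s
    rw [hκ, Real.div_rpow hc.le (hupos s).le, Real.rpow_neg (hupos s).le, div_eq_mul_inv]
  have key : ∀ s : ℝ,
      deriv (deriv (fun t => κ t ^ (-(1/2) : ℝ))) s = κ s ^ ((3/2) : ℝ) := by
    intro s
    rw [hfun, cat_second_deriv c hc s, hκ32]
  intro s
  refine ⟨hκpos s, ?_, key s⟩
  have hhalf : deriv (deriv (fun t => (1/2 : ℝ) * κ t ^ (-(1/2) : ℝ))) s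
      = (1/2 : ℝ) * deriv (deriv (fun t => κ t ^ (-(1/2) : ℝ))) s := by
    have : deriv (fun t => (1/2 : ℝ) * κ t ^ (-(1/2) : ℝ))
        = fun t => (1/2 : ℝ) * deriv (fun t => κ t ^ (-(1/2) : ℝ)) t := by
      funext t; exact deriv_const_mul_field _
    rw [this]
    exact deriv_const_mul_field _
  rw [hhalf, key s]
  have hp := hκpos s
  have e1 : κ s ^ 2 * κ s ^ (-(1/2) : ℝ) = κ s ^ ((3/2) : ℝ) := by
    rw [← Real.rpow_natCast (κ s) 2, ← Real.rpow_add hp]; norm_num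
  have e2 : κ s * κ s ^ ((1/2) : ℝ) = κ s ^ ((3/2) : ℝ) := by
    nth_rewrite 1 [← Real.rpow_one (κ s)]
    rw [← Real.rpow_add hp]; norm_num
  calc (1/2 : ℝ) * κ s ^ ((3/2) : ℝ) + κ s ^ 2 * ((1/2) * κ s ^ (-(1/2) : ℝ))
        - κ s * κ s ^ ((1/2) : ℝ)
      = (1/2 : ℝ) * κ s ^ ((3/2) : ℝ) + (1/2) * (κ s ^ 2 * κ s ^ (-(1/2) : ℝ))
        - κ s * κ s ^ ((1/2) : ℝ) := by ring
    _ = 0 := by rw [e1, e2]; ring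
end

section
/- Let X : ℝ → ℝ² be a smooth unit-speed curve with unit tangent T = X', unit normal N (the counter-clockwise rotation of T by π/2) and signed curvature κ defined by T' = κN. Assume κ(s) > 0 for all s, κ is not a constant function, a ≠ 0, and there is a constant vector V ∈ ℝ² with κ(s)^{−1} = a⟨N(s), V⟩ for all s (i.e., X is a translating soliton to the inverse curvature flow, the case p = −1, b = 0). Then (d²/ds²)(κ(s)^{−2}) = −2 for all s, and consequently there exist constants α, β ∈ ℝ such that κ(s)^{−2} = −s² + αs + β for all s. -/
private lemma hasDerivAt_fst' {f : ℝ → ℝ × ℝ} {d : ℝ × ℝ} {x : ℝ}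
    (h : HasDerivAt f d x) : HasDerivAt (fun s => (f s).1) d.1 x := by
  have := (h.hasFDerivAt.fst).hasDerivAt
  simpa using this

private lemma hasDerivAt_snd' {f : ℝ → ℝ × ℝ} {d : ℝ × ℝ} {x : ℝ}
    (h : HasDerivAt f d x) : HasDerivAt (fun s => (f s).2) d.2 x := by
  have := (h.hasFDerivAt.snd).hasDerivAt
  simpa using this

/-- A smooth unit-speed plane curve with positive nonconstant curvature which
is a translating soliton to the inverse curvature flow (`κ⁻¹ = a⟨N, V⟩`)
satisfies `(κ⁻²)'' = -2`, and hence `κ⁻² = -s² + αs + β` for some constants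
`α, β`. -/
theorem inverse_curvature_flow_soliton_curvature
    (X : ℝ → ℝ × ℝ) (κ : ℝ → ℝ) (a : ℝ)
    (hX : ContDiff ℝ (⊤ : ℕ∞) X) (hκsmooth : ContDiff ℝ (⊤ : ℕ∞) κ)
    (hunit : ∀ s : ℝ, (deriv X s).1 ^ 2 + (deriv X s).2 ^ 2 = 1)
    (hfrenet : ∀ s : ℝ, deriv (deriv X) s = κ s • (-(deriv X s).2, (deriv X s).1))
    (hpos : ∀ s : ℝ, 0 < κ s)
    (hnonconst : ∃ s₁ s₂ : ℝ, κ s₁ ≠ κ s₂)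
    (ha : a ≠ 0)
    (V : ℝ × ℝ)
    (hsol : ∀ s : ℝ,
      (κ s)⁻¹ = a * ((-(deriv X s).2) * V.1 + (deriv X s).1 * V.2)) :
    (∀ s : ℝ, deriv (deriv (fun t => (κ t ^ 2)⁻¹)) s = -2) ∧
    (∃ α β : ℝ, ∀ s : ℝ, (κ s ^ 2)⁻¹ = -s ^ 2 + α * s + β) := by
  have hκne : ∀ s, κ s ≠ 0 := fun s => (hpos s).ne'
  -- derivative of deriv X
  have hXd : ContDiff ℝ (⊤ : ℕ∞) (deriv X) := by
    have h1 : ContDiff ℝ (⊤ : ℕ∞) (fderiv ℝ X) := hX.fderiv_right (by simp)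
    have h2 : ContDiff ℝ (⊤ : ℕ∞) (fun s => fderiv ℝ X s 1) := h1.clm_apply contDiff_const
    have h3 : deriv X = fun s => fderiv ℝ X s 1 := by
      funext s; exact (fderiv_apply_one_eq_deriv).symm
    rw [h3]; exact h2
  have hT' : ∀ s, HasDerivAt (deriv X)
      (κ s • (-(deriv X s).2, (deriv X s).1)) s := by
    intro s
    have h := (hXd.differentiable (by simp) s).hasDerivAt
    rwa [hfrenet s] at h
  have hT1' : ∀ s, HasDerivAt (fun t => (deriv X t).1)
      (κ s * (-(deriv X s).2)) s := by
    intro s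
    have := hasDerivAt_fst' (hT' s)
    simpa using this
  have hT2' : ∀ s, HasDerivAt (fun t => (deriv X t).2)
      (κ s * (deriv X s).1) s := by
    intro s
    have := hasDerivAt_snd' (hT' s)
    simpa using this
  -- the function g = κ⁻¹
  set g : ℝ → ℝ := fun s => a * ((-(deriv X s).2) * V.1 + (deriv X s).1 * V.2)
    with hg
  have hg' : ∀ s, HasDerivAt g
      (-(a * κ s) * ((deriv X s).1 * V.1 + (deriv X s).2 * V.2)) s := by
    intro s
    have h := (((hT2' s).neg.mul_const V.1).add ((hT1' s).mul_const V.2)).const_mul a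
    refine h.congr_deriv ?_
    ring
  -- the function f = κ⁻² equals g²
  have hfg : (fun t => (κ t ^ 2)⁻¹) = fun t => g t ^ 2 := by
    funext t
    have hgt : g t = (κ t)⁻¹ := (hsol t).symm
    rw [hgt, inv_pow]
  -- first derivative of g²
  have hgsq' : ∀ s, HasDerivAt (fun t => g t ^ 2)
      (-2 * a * ((deriv X s).1 * V.1 + (deriv X s).2 * V.2)) s := by
    intro s
    have h := (hg' s).pow 2
    refine h.congr_deriv ?_
    have hgs : g s = (κ s)⁻¹ := (hsol s).symm
    have h1 : κ s * (κ s)⁻¹ = 1 := mul_inv_cancel₀ (hκne s)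
    simp only [hgs]
    linear_combination (-2 * a * ((deriv X s).1 * V.1 + (deriv X s).2 * V.2)) * h1
  have hD1 : deriv (fun t => g t ^ 2)
      = fun s => -2 * a * ((deriv X s).1 * V.1 + (deriv X s).2 * V.2) := by
    funext s; exact (hgsq' s).deriv
  -- second derivative of g² is -2
  have hD2 : ∀ s, HasDerivAt (deriv (fun t => g t ^ 2)) (-2) s := by
    intro s
    rw [hD1]
    have h := (((hT1' s).mul_const V.1).add ((hT2' s).mul_const V.2)).const_mul (-2 * a)
    have hval : -2 * a * (κ s * -(deriv X s).2 * V.1 + κ s * (deriv X s).1 * V.2)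
        = -2 := by
      have : a * (-(deriv X s).2 * V.1 + (deriv X s).1 * V.2) = (κ s)⁻¹ :=
        (hsol s).symm
      have h2 : κ s * (a * (-(deriv X s).2 * V.1 + (deriv X s).1 * V.2)) = 1 := by
        rw [this]; exact mul_inv_cancel₀ (hκne s)
      nlinarith [h2]
    rwa [hval] at h
  constructor
  · intro s
    rw [hfg]
    exact (hD2 s).deriv
  · -- antiderivative argument
    set F : ℝ → ℝ := deriv (fun t => g t ^ 2) with hF
    -- F s = F 0 - 2 s
    have hK : ∀ s, HasDerivAt (fun t => F t + 2 * t) 0 s := by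
      intro s
      exact ((hD2 s).add ((hasDerivAt_id s).const_mul 2)).congr_deriv (by norm_num)
    have hKconst : ∀ s, F s + 2 * s = F 0 := by
      intro s
      have := is_const_of_deriv_eq_zero (f := fun t => F t + 2 * t)
        (fun t => (hK t).differentiableAt) (fun t => (hK t).deriv) s 0
      simpa using this
    -- H s = g s ^ 2 + s² - F 0 * s is constant
    have hH : ∀ s, HasDerivAt (fun t => g t ^ 2 + t ^ 2 - F 0 * t) 0 s := by
      intro s
      have h1 : HasDerivAt (fun t => g t ^ 2) (F s) s := by
        have := hgsq' s
        rwa [show -2 * a * ((deriv X s).1 * V.1 + (deriv X s).2 * V.2) = F s from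
          ((hgsq' s).deriv).symm] at this
      have h2 := ((h1.add ((hasDerivAt_pow 2 s))).sub ((hasDerivAt_id s).const_mul (F 0)))
      have hFs : F s = F 0 - 2 * s := by linarith [hKconst s]
      refine h2.congr_deriv ?_
      rw [hFs]
      push_cast
      ring
    have hHconst : ∀ s, g s ^ 2 + s ^ 2 - F 0 * s = g 0 ^ 2 := by
      intro s
      have := is_const_of_deriv_eq_zero (f := fun t => g t ^ 2 + t ^ 2 - F 0 * t)
        (fun t => (hH t).differentiableAt) (fun t => (hH t).deriv) s 0
      simpa using this
    refine ⟨F 0, g 0 ^ 2, fun s => ?_⟩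
    have := hHconst s
    have hgs : (κ s ^ 2)⁻¹ = g s ^ 2 := by
      have hgt : g s = (κ s)⁻¹ := (hsol s).symm
      rw [hgt, inv_pow]
    rw [hgs]; linarith
end
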